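/- arXiv:0910.2393 — 5 statements merged into one kernel-verified Lean document; each statement's English description precedes it below -/
import Mathlib

section
/- Let H be a complex Hilbert space and let S, T be closed subspaces of H. If e_H(ψ, S) = e_H(ψ, T) for every nonzero vector ψ ∈ H, then S = T. (Extensionality of the quantum Chu space.) -/
/-- The quantum evaluation `e_H(ψ, S) = ‖P_S ψ‖² / ‖ψ‖²` for a closed subspace `S`
of a complex Hilbert space `H`. -/
noncomputable def qeval {H : Type*} [NormedAddCommGroup H] [InnerProductSpace ℂ H]
    [CompleteSpace H] (ψ : H) (S : Submodule ℂ H) (hS : IsClosed (S : Set H)) : ℝ :=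
  letI : CompleteSpace S := hS.completeSpace_coe
  ‖(Submodule.orthogonalProjectionOnto S ψ : H)‖ ^ 2 / ‖ψ‖ ^ 2

theorem qeval_eq_one_iff_mem {H : Type*} [NormedAddCommGroup H] [InnerProductSpace ℂ H]
    [CompleteSpace H] {ψ : H} (hψ : ψ ≠ 0) {S : Submodule ℂ H} (hS : IsClosed (S : Set H)) :
    qeval ψ S hS = 1 ↔ ψ ∈ S := by
  have : CompleteSpace S := hS.completeSpace_coe
  rw [qeval, div_eq_one_iff_eq (by positivity), S.mem_iff_norm_starProjection,
    S.coe_orthogonalProjectionOnto_apply, pow_left_inj₀ (norm_nonneg _) (norm_nonneg _) two_ne_zero]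

/-- Extensionality of the quantum Chu space: if two closed subspaces `S`, `T` of a complex
Hilbert space have the same evaluation on every nonzero vector, they are equal. -/
theorem qeval_extensional {H : Type*} [NormedAddCommGroup H] [InnerProductSpace ℂ H]
    [CompleteSpace H] (S T : Submodule ℂ H)
    (hS : IsClosed (S : Set H)) (hT : IsClosed (T : Set H))
    (h : ∀ ψ : H, ψ ≠ 0 → qeval ψ S hS = qeval ψ T hT) :
    S = T := by
  ext ψ
  rcases eq_or_ne ψ 0 with rfl | hψ
  · simp only [zero_mem]
  · rw [← qeval_eq_one_iff_mem hψ hS, ← qeval_eq_one_iff_mem hψ hT, h ψ hψ]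
end

section
/- Let (f_*, f^*) be a Chu morphism of biextensional quantum Chu spaces from H to K. For a closed subspace S of H define f→(S) to be the topological closure of the linear span of all representatives of f_*([ψ]) for nonzero ψ ∈ S. Then f→ is left adjoint to f^*: for every closed subspace S of H and every closed subspace T of K, f→(S) ⊆ T if and only if S ⊆ f^*(T). -/
/-- The direct image `f→(S)`: the topological closure of the linear span of all
representatives of the rays `f₁ [ψ]` for nonzero `ψ ∈ S`. -/
noncomputable def chuDirImage {H K : Type*}
    [NormedAddCommGroup H] [InnerProductSpace ℂ H]
    [NormedAddCommGroup K] [InnerProductSpace ℂ K]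
    (f₁ : Projectivization ℂ H → Projectivization ℂ K) (S : Submodule ℂ H) :
    Submodule ℂ K :=
  (Submodule.span ℂ {χ : K | ∃ (ψ : H) (hψ : ψ ≠ 0) (_ : ψ ∈ S) (hχ : χ ≠ 0),
      Projectivization.mk ℂ χ hχ = f₁ (Projectivization.mk ℂ ψ hψ)}).topologicalClosure

theorem chuDirImage_le_iff {H K : Type*}
    [NormedAddCommGroup H] [InnerProductSpace ℂ H]
    [NormedAddCommGroup K] [InnerProductSpace ℂ K]
    (f₁ : Projectivization ℂ H → Projectivization ℂ K) (S : Submodule ℂ H)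
    {T : Submodule ℂ K} (hT : IsClosed (T : Set K)) :
    chuDirImage f₁ S ≤ T ↔ ∀ (ψ : H) (hψ : ψ ≠ 0), ψ ∈ S → ∀ (χ : K) (hχ : χ ≠ 0),
      Projectivization.mk ℂ χ hχ = f₁ (Projectivization.mk ℂ ψ hψ) → χ ∈ T := by
  refine ⟨fun h => ?_, fun h => ?_⟩
  · intro ψ hψ hψS χ hχ hmk
    exact h (Submodule.le_topologicalClosure _ (Submodule.subset_span ⟨ψ, hψ, hψS, hχ, hmk⟩))
  · refine Submodule.topologicalClosure_minimal _ ?_ hT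
    rw [Submodule.span_le]
    rintro χ ⟨ψ, hψ, hψS, hχ, hmk⟩
    exact h ψ hψ hψS χ hχ hmk

/-- Let `(f₁, f₂)` be a Chu morphism of biextensional quantum Chu spaces from `H` to `K`.
Then `f→` is left adjoint to `f₂`: for closed subspaces `S` of `H` and `T` of `K`,
`f→(S) ⊆ T` iff `S ⊆ f₂ T`. -/
theorem chu_dirImage_adjoint
    {H K : Type*} [NormedAddCommGroup H] [InnerProductSpace ℂ H] [CompleteSpace H]
    [NormedAddCommGroup K] [InnerProductSpace ℂ K] [CompleteSpace K]
    (f₁ : Projectivization ℂ H → Projectivization ℂ K)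
    (f₂ : {S : Submodule ℂ K // IsClosed (S : Set K)} →
          {S : Submodule ℂ H // IsClosed (S : Set H)})
    (hchu : ∀ (ψ : H) (hψ : ψ ≠ 0) (S : {S : Submodule ℂ K // IsClosed (S : Set K)})
      (φ : K) (hφ : φ ≠ 0), Projectivization.mk ℂ φ hφ = f₁ (Projectivization.mk ℂ ψ hψ) →
      qeval ψ (f₂ S).1 (f₂ S).2 = qeval φ S.1 S.2) :
    ∀ (S : Submodule ℂ H) (_ : IsClosed (S : Set H))
      (T : {T : Submodule ℂ K // IsClosed (T : Set K)}),
      chuDirImage f₁ S ≤ T.1 ↔ S ≤ (f₂ T).1 := by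
  intro S _ T
  have mem_iff : ∀ (ψ : H) (hψ : ψ ≠ 0) (χ : K) (hχ : χ ≠ 0),
      Projectivization.mk ℂ χ hχ = f₁ (Projectivization.mk ℂ ψ hψ) →
      (χ ∈ T.1 ↔ ψ ∈ (f₂ T).1) := fun ψ hψ χ hχ hmk => by
    rw [← qeval_eq_one_iff_mem hχ T.2, ← qeval_eq_one_iff_mem hψ (f₂ T).2, hchu ψ hψ T χ hχ hmk]
  rw [chuDirImage_le_iff f₁ S T.2]
  refine ⟨fun h ψ hψS => ?_, fun h ψ hψ hψS χ hχ hmk => (mem_iff ψ hψ χ hχ hmk).2 (h hψS)⟩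
  by_cases hψ : ψ = 0
  · exact hψ ▸ (f₂ T).1.zero_mem
  · set φ := f₁ (Projectivization.mk ℂ ψ hψ)
    exact (mem_iff ψ hψ φ.rep φ.rep_nonzero φ.mk_rep).1 (h ψ hψ hψS _ _ φ.mk_rep)
end

section
/- Let H and K be complex Hilbert spaces and let U, V : H → K be either both unitary or both antiunitary. If U and V induce the same map on rays, i.e. for every ψ ∈ H there exists μ ∈ ℂ with U ψ = μ • V ψ, then there exists λ ∈ ℂ with |λ| = 1 such that U ψ = λ • V ψ for all ψ ∈ H. (A semiunitary map is determined by its projective action up to a phase.) -/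
/-!
`V⁻¹ ∘ U` is complex linear whether `U`, `V` are both unitary or both antiunitary, and the
hypothesis makes every vector an eigenvector of it, so it is a scalar `c`. Then `U = σ c • V`,
where `σ` is the identity or complex conjugation, and comparing norms gives `‖σ c‖ = 1`.
-/

theorem LinearMap.exists_eq_smul_id_of_forall_exists_smul {R V : Type*} [CommRing R] [IsDomain R]
    [AddCommGroup V] [Module R V] [Module.Free R V] {f : V →ₗ[R] V}
    (h : ∀ v, ∃ μ : R, f v = μ • v) : ∃ c : R, f = c • 1 := by
  refine exists_eq_smul_id_of_forall_notLinearIndependent fun v hv => ?_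
  obtain ⟨μ, hμ⟩ := h v
  have := LinearIndependent.pair_iff.mp hv μ (-1) (by rw [hμ, neg_one_smul, add_neg_cancel])
  exact one_ne_zero (neg_eq_zero.mp this.2)

theorem LinearIsometry.norm_eq_one_of_apply_eq_smul {𝕜 𝕜₂ E F : Type*} [Semiring 𝕜]
    [NormedField 𝕜₂] {σ : 𝕜 →+* 𝕜₂} [NormedAddCommGroup E] [Module 𝕜 E]
    [SeminormedAddCommGroup F] [Module 𝕜₂ F] [NormSMulClass 𝕜₂ F]
    (f g : E →ₛₗᵢ[σ] F) {c : 𝕜₂} {x : E} (hx : x ≠ 0) (h : f x = c • g x) : ‖c‖ = 1 := by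
  refine mul_right_cancel₀ (norm_ne_zero_iff.mpr hx) ?_
  calc ‖c‖ * ‖x‖ = ‖c • g x‖ := by rw [norm_smul, g.norm_map]
    _ = 1 * ‖x‖ := by rw [← h, f.norm_map, one_mul]

namespace LinearIsometryEquiv

variable {𝕜 E F : Type*}

theorem exists_eq_smul_of_forall_exists_smul [Field 𝕜] {σ σ' : 𝕜 →+* 𝕜} [RingHomInvPair σ σ']
    [RingHomInvPair σ' σ] [SeminormedAddCommGroup E] [Module 𝕜 E]
    [SeminormedAddCommGroup F] [Module 𝕜 F] (U V : E ≃ₛₗᵢ[σ] F)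
    (h : ∀ x, ∃ μ : 𝕜, U x = μ • V x) : ∃ c : 𝕜, ∀ x, U x = c • V x := by
  obtain ⟨c, hc⟩ := LinearMap.exists_eq_smul_id_of_forall_exists_smul
    (f := V.symm.toLinearEquiv.toLinearMap.comp U.toLinearEquiv.toLinearMap) fun x => by
      obtain ⟨μ, hμ⟩ := h x
      exact ⟨σ' μ, by simp [hμ, map_smulₛₗ]⟩
  refine ⟨σ c, fun x => ?_⟩
  have hx : V.symm (U x) = c • x := LinearMap.congr_fun hc x
  rw [← V.apply_symm_apply (U x), hx, map_smulₛₗ]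

theorem exists_norm_eq_one_smul_of_forall_exists_smul [NormedField 𝕜] {σ σ' : 𝕜 →+* 𝕜}
    [RingHomInvPair σ σ'] [RingHomInvPair σ' σ] [NormedAddCommGroup E] [Module 𝕜 E]
    [SeminormedAddCommGroup F] [Module 𝕜 F] [NormSMulClass 𝕜 F] (U V : E ≃ₛₗᵢ[σ] F)
    (h : ∀ x, ∃ μ : 𝕜, U x = μ • V x) : ∃ c : 𝕜, ‖c‖ = 1 ∧ ∀ x, U x = c • V x := by
  obtain ⟨c, hc⟩ := exists_eq_smul_of_forall_exists_smul U V h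
  rcases subsingleton_or_nontrivial E with _ | _
  · exact ⟨1, norm_one, fun x => by simp [Subsingleton.elim x 0]⟩
  · obtain ⟨x, hx⟩ := exists_ne (0 : E)
    exact ⟨c, U.toLinearIsometry.norm_eq_one_of_apply_eq_smul V.toLinearIsometry hx (hc x), hc⟩

end LinearIsometryEquiv

theorem semiunitary_projective_determines_up_to_phase_general
    {H K : Type*} [NormedAddCommGroup H] [InnerProductSpace ℂ H]
    [NormedAddCommGroup K] [InnerProductSpace ℂ K] :
    (∀ U V : H ≃ₗᵢ[ℂ] K, (∀ ψ : H, ∃ μ : ℂ, U ψ = μ • V ψ) →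
      ∃ lam : ℂ, ‖lam‖ = 1 ∧ ∀ ψ : H, U ψ = lam • V ψ) ∧
    (∀ U V : H ≃ₛₗᵢ[starRingEnd ℂ] K, (∀ ψ : H, ∃ μ : ℂ, U ψ = μ • V ψ) →
      ∃ lam : ℂ, ‖lam‖ = 1 ∧ ∀ ψ : H, U ψ = lam • V ψ) :=
  ⟨LinearIsometryEquiv.exists_norm_eq_one_smul_of_forall_exists_smul,
    LinearIsometryEquiv.exists_norm_eq_one_smul_of_forall_exists_smul⟩

/-- A semiunitary map (unitary `H ≃ₗᵢ[ℂ] K` or antiunitary `H ≃ₛₗᵢ[starRingEnd ℂ] K`)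
is determined by its action on rays up to a global phase: if `U` and `V` are both unitary,
or both antiunitary, and `U ψ` is a scalar multiple of `V ψ` for every `ψ`, then there is a
single `λ ∈ ℂ` with `|λ| = 1` such that `U ψ = λ • V ψ` for all `ψ`. -/
theorem semiunitary_projective_determines_up_to_phase
    {H K : Type*} [NormedAddCommGroup H] [InnerProductSpace ℂ H] [CompleteSpace H]
    [NormedAddCommGroup K] [InnerProductSpace ℂ K] [CompleteSpace K] :
    (∀ U V : H ≃ₗᵢ[ℂ] K, (∀ ψ : H, ∃ μ : ℂ, U ψ = μ • V ψ) →
      ∃ lam : ℂ, ‖lam‖ = 1 ∧ ∀ ψ : H, U ψ = lam • V ψ) ∧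
    (∀ U V : H ≃ₛₗᵢ[starRingEnd ℂ] K, (∀ ψ : H, ∃ μ : ℂ, U ψ = μ • V ψ) →
      ∃ lam : ℂ, ‖lam‖ = 1 ∧ ∀ ψ : H, U ψ = lam • V ψ) :=
  semiunitary_projective_determines_up_to_phase_general
end

section
/- Let H and K be complex Hilbert spaces and let U : H → K be antiunitary (a bijective isometry semilinear over complex conjugation: U(λψ) = conj(λ)·U(ψ)). For every closed subspace S of K, the preimage U⁻¹(S) is a closed subspace of H, and: (a) P_S(U ψ) = U(P_{U⁻¹(S)} ψ) for all ψ ∈ H; (b) e_H(ψ, U⁻¹(S)) = e_K(U ψ, S) for every nonzero ψ ∈ H. Hence (U, U⁻¹) is a Chu morphism of the quantum Chu spaces. -/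
open scoped InnerProductSpace

section

variable {H K : Type*} [NormedAddCommGroup H] [InnerProductSpace ℂ H]
  [NormedAddCommGroup K] [InnerProductSpace ℂ K]

theorem LinearIsometry.inner_map_map_of_antilinear (U : H →ₛₗᵢ[starRingEnd ℂ] K) (x y : H) :
    ⟪U x, U y⟫_ℂ = ⟪y, x⟫_ℂ := by
  -- The real part is recovered from norms by polarization, and the imaginary part is a real part
  -- after rotating `y` by `-I`, which `U` turns into a rotation by `I`.
  have re_map : ∀ x y : H, RCLike.re ⟪U x, U y⟫_ℂ = RCLike.re ⟪x, y⟫_ℂ := fun x y => by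
    rw [re_inner_eq_norm_add_mul_self_sub_norm_sub_mul_self_div_four,
      re_inner_eq_norm_add_mul_self_sub_norm_sub_mul_self_div_four, ← map_add, ← map_sub,
      U.norm_map, U.norm_map]
  apply Complex.ext
  · rw [← inner_conj_symm y x, Complex.conj_re]
    exact re_map x y
  · have h := re_map x ((-Complex.I) • y)
    rw [U.map_smulₛₗ, Complex.conj_neg_I, inner_smul_right, inner_smul_right] at h
    rw [← inner_conj_symm y x, Complex.conj_im]
    simp only [RCLike.re_to_complex, Complex.mul_re, Complex.I_re, Complex.I_im, Complex.neg_re,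
      Complex.neg_im] at h
    linarith

theorem LinearIsometryEquiv.starProjection_comap_of_antilinear (U : H ≃ₛₗᵢ[starRingEnd ℂ] K)
    (S : Submodule ℂ K) [S.HasOrthogonalProjection]
    [(S.comap (U.toLinearEquiv : H →ₛₗ[starRingEnd ℂ] K)).HasOrthogonalProjection] (ψ : H) :
    S.starProjection (U ψ) =
      U ((S.comap (U.toLinearEquiv : H →ₛₗ[starRingEnd ℂ] K)).starProjection ψ) := by
  refine Submodule.eq_starProjection_of_mem_of_inner_eq_zero
    (Submodule.mem_comap.mp (Submodule.starProjection_apply_mem _ ψ))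
    fun w hw => ?_
  have hw' : U.symm w ∈ S.comap (U.toLinearEquiv : H →ₛₗ[starRingEnd ℂ] K) := by simpa using hw
  rw [← U.apply_symm_apply w, ← map_sub]
  exact (U.toLinearIsometry.inner_map_map_of_antilinear _ _).trans
    (Submodule.inner_right_of_mem_orthogonal hw' (Submodule.sub_starProjection_mem_orthogonal ψ))
end

/-- Let `U : H ≃ₛₗᵢ[starRingEnd ℂ] K` be antiunitary.  For every closed subspace `S` of `K`,
the preimage `U⁻¹(S)` is a closed subspace of `H`, and (a) `P_S (U ψ) = U (P_{U⁻¹ S} ψ)`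
for all `ψ`, (b) `e_H(ψ, U⁻¹ S) = e_K(U ψ, S)` for all nonzero `ψ`.  Hence `(U, U⁻¹)` is a
Chu morphism of the quantum Chu spaces. -/
theorem antiunitary_chu_morphism
    {H K : Type*} [NormedAddCommGroup H] [InnerProductSpace ℂ H] [CompleteSpace H]
    [NormedAddCommGroup K] [InnerProductSpace ℂ K] [CompleteSpace K]
    (U : H ≃ₛₗᵢ[starRingEnd ℂ] K) (S : Submodule ℂ K) (hS : IsClosed (S : Set K)) :
    ∃ hpre : IsClosed
        ((S.comap (U.toLinearEquiv : H →ₛₗ[starRingEnd ℂ] K) : Submodule ℂ H) : Set H),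
      (∀ ψ : H,
        letI : CompleteSpace S := hS.completeSpace_coe
        letI : CompleteSpace (S.comap (U.toLinearEquiv : H →ₛₗ[starRingEnd ℂ] K)) :=
          hpre.completeSpace_coe
        (Submodule.orthogonalProjectionOnto S (U ψ) : K) =
          U (Submodule.orthogonalProjectionOnto (S.comap (U.toLinearEquiv : H →ₛₗ[starRingEnd ℂ] K)) ψ)) ∧
      (∀ ψ : H, ψ ≠ 0 →
        qeval ψ (S.comap (U.toLinearEquiv : H →ₛₗ[starRingEnd ℂ] K)) hpre =
          qeval (U ψ) S hS) := by
  have hpre : IsClosed ((S.comap (U.toLinearEquiv : H →ₛₗ[starRingEnd ℂ] K) : Submodule ℂ H) :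
      Set H) := hS.preimage U.continuous
  have : CompleteSpace S := hS.completeSpace_coe
  have : CompleteSpace (S.comap (U.toLinearEquiv : H →ₛₗ[starRingEnd ℂ] K)) :=
    hpre.completeSpace_coe
  have proj_map (ψ : H) := U.starProjection_comap_of_antilinear S ψ
  refine ⟨hpre, proj_map, fun ψ _ => ?_⟩
  rw [qeval, qeval, ← Submodule.starProjection_apply, ← Submodule.starProjection_apply, proj_map,
    U.norm_map, U.norm_map]
end

section
/- Let H and K be complex Hilbert spaces, each of dimension greater than 2 (Module.rank ℂ H > 2 and Module.rank ℂ K > 2). Let f_* : ℙ(H) → ℙ(K) be injective and let f^* map closed subspaces of K to closed subspaces of H, such that for every nonzero ψ ∈ H and every closed subspace S of K, with φ a representative of f_*([ψ]): (i) ψ ∈ f^*(S) if and only if φ ∈ S, and (ii) ψ ⊥ f^*(S) (i.e. ψ ∈ f^*(S)ᗮ) if and only if φ ⊥ S. Then there exists a semiunitary map U : H → K (unitary or antiunitary) such that f_*([ψ]) = [U ψ] for every nonzero ψ ∈ H. (Fullness of the three-valued representation: the Chu morphism condition recording only the distinctions e = 0, e = 1, and 0 < e < 1 already forces semiunitarity.)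 -/
/-!
Pick a unit vector `rayRep f₁ ψ` on each image ray. Conditions (i) and (ii), applied to subspaces
spanned by finitely many vectors, show that this lift `F` preserves orthogonality in both
directions, maps `span {x, y}` into `span {F x, F y}`, and meets every ray of `K`: a ray missed by
`f₁` is orthogonal to the whole image, and then so is the line through its sum with an image
vector, which is absurd.

Fix a Hilbert basis `e` of `H`. The vector `F (e i + c • e j)` lies on the ray of
`F (e i) + g_ij(c) • F (e j)`, where `g_ij = coordRatio F e i j`; as
`e i + c • e j ⊥ e i + c' • e j` iff `1 + conj c * c' = 0`, orthogonality preservation ties the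
coordinates of every `F ψ` to the `g_ij`. Comparing coordinates along planes through three basis
directions shows that `g_ij` is additive and `g_ik(l * d) = g_jk(d) * g_ij(l)`, so
`g_ij = g_ij(1) • σ` for a single ring endomorphism `σ` of `ℂ`, which commutes with conjugation
and is therefore the identity or conjugation. After rotating each `F (e t)` by a phase, the
coordinates of `F ψ` are proportional to `σ` applied to those of `ψ`: this is the required
unitary or antiunitary map.
-/

open Submodule (span)
open scoped InnerProductSpace ComplexConjugate Cardinal

noncomputable section

theorem Complex.ringHom_eq_id_or_conj_of_map_conj {σ : ℂ →+* ℂ}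
    (hσ : ∀ z, σ (conj z) = conj (σ z)) : σ = RingHom.id ℂ ∨ σ = starRingEnd ℂ := by
  have him : ∀ r : ℝ, (σ r).im = 0 := fun r =>
    Complex.conj_eq_iff_im.mp (by rw [← hσ, Complex.conj_ofReal])
  -- `σ` restricts to a ring endomorphism of `ℝ`, hence fixes `ℝ`, so it is `ℝ`-linear
  let ρ : ℝ →+* ℝ :=
    { toFun := fun r => (σ r).re
      map_one' := by simp
      map_mul' := fun r s => by simp [Complex.mul_re, him]
      map_zero' := by simp
      map_add' := fun r s => by simp }
  have hreal : ∀ r : ℝ, σ r = r := fun r =>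
    Complex.ext (RingHom.congr_fun (Subsingleton.elim ρ (RingHom.id ℝ)) r) (by simp [him])
  let L : ℂ →ₗ[ℝ] ℂ :=
    { toFun := σ
      map_add' := map_add σ
      map_smul' := fun r z => by simp [Complex.real_smul, hreal] }
  exact Complex.ringHom_eq_id_or_conj_of_continuous L.continuous_of_finiteDimensional

namespace HilbertBasis

variable {ι 𝕜 E : Type*} [RCLike 𝕜] [NormedAddCommGroup E] [InnerProductSpace 𝕜 E]

theorem lt_mk_of_lt_rank (b : HilbertBasis ι 𝕜 E) {n : ℕ} (h : n < Module.rank 𝕜 E) :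
    n < #ι := by
  cases finite_or_infinite ι
  · have := Fintype.ofFinite ι
    rw [rank_eq_card_basis b.toOrthonormalBasis.toBasis] at h
    rw [Cardinal.mk_fintype]
    exact_mod_cast h
  · exact (Cardinal.natCast_lt_aleph0 (n := n)).trans_le (Cardinal.aleph0_le_mk ι)

theorem ext_inner (b : HilbertBasis ι 𝕜 E) {x y : E} (h : ∀ i, ⟪b i, x⟫_𝕜 = ⟪b i, y⟫_𝕜) :
    x = y :=
  b.repr.injective (lp.ext (funext fun i => by simp only [b.repr_apply_apply, h]))

end HilbertBasis

theorem Projectivization.mk_eq_mk_iff_mem_span_singleton {K V : Type*} [DivisionRing K]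
    [AddCommGroup V] [Module K V] {v w : V} (hv : v ≠ 0) (hw : w ≠ 0) :
    mk K v hv = mk K w hw ↔ v ∈ K ∙ w := by
  rw [mk_eq_mk_iff', Submodule.mem_span_singleton]

section

variable {ι H K : Type*} [NormedAddCommGroup H] [InnerProductSpace ℂ H]
  [NormedAddCommGroup K] [InnerProductSpace ℂ K]

structure IsOrthoCollinear (F : H → K) : Prop where
  inner_eq_zero_iff (x y : H) : ⟪F x, F y⟫_ℂ = 0 ↔ ⟪x, y⟫_ℂ = 0
  mem_span_pair {x y z : H} : z ∈ span ℂ {x, y} → F z ∈ span ℂ {F x, F y}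
  exists_mem_span_singleton (k : K) : k ≠ 0 → ∃ x, x ≠ 0 ∧ F x ∈ ℂ ∙ k

section ChuMorphism

def finiteSpan {s : Set K} (hs : s.Finite) : {S : Submodule ℂ K // IsClosed (S : Set K)} :=
  ⟨span ℂ s, haveI := FiniteDimensional.span_of_finite ℂ hs
    Submodule.closed_of_finiteDimensional _⟩

open Classical in
def rayRep (f : Projectivization ℂ H → Projectivization ℂ K) (ψ : H) : K :=
  if hψ : ψ = 0 then 0 else (‖(f (.mk ℂ ψ hψ)).rep‖⁻¹ : ℂ) • (f (.mk ℂ ψ hψ)).rep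

variable {f₁ : Projectivization ℂ H → Projectivization ℂ K}

@[simp]
theorem rayRep_zero : rayRep f₁ 0 = 0 := dif_pos rfl

theorem norm_rayRep {ψ : H} (hψ : ψ ≠ 0) : ‖rayRep f₁ ψ‖ = 1 := by
  rw [rayRep, dif_neg hψ]
  exact norm_smul_inv_norm (Projectivization.rep_nonzero _)

theorem rayRep_ne_zero {ψ : H} (hψ : ψ ≠ 0) : rayRep f₁ ψ ≠ 0 :=
  norm_ne_zero_iff.mp (by simp [norm_rayRep hψ])

theorem mk_rayRep {ψ : H} (hψ : ψ ≠ 0) :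
    Projectivization.mk ℂ (rayRep f₁ ψ) (rayRep_ne_zero hψ) = f₁ (.mk ℂ ψ hψ) := by
  conv_rhs => rw [← Projectivization.mk_rep (f₁ (.mk ℂ ψ hψ))]
  rw [Projectivization.mk_eq_mk_iff']
  exact ⟨(‖(f₁ (.mk ℂ ψ hψ)).rep‖⁻¹ : ℂ), by rw [rayRep, dif_neg hψ]⟩

theorem apply_mk_eq_mk_of_rayRep_eq_smul {ψ : H} (hψ : ψ ≠ 0) {k : K} (hk : k ≠ 0)
    (h : ∃ μ : ℂ, rayRep f₁ ψ = μ • k) : f₁ (.mk ℂ ψ hψ) = .mk ℂ k hk := by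
  rw [← mk_rayRep (f₁ := f₁) hψ, Projectivization.mk_eq_mk_iff']
  obtain ⟨μ, hμ⟩ := h
  exact ⟨μ, hμ.symm⟩

variable {f₂ : {S : Submodule ℂ K // IsClosed (S : Set K)} →
    {S : Submodule ℂ H // IsClosed (S : Set H)}}
  (hmem : ∀ S ψ, ψ ≠ 0 → (ψ ∈ (f₂ S).1 ↔ rayRep f₁ ψ ∈ S.1))
  (horth : ∀ S ψ, ψ ≠ 0 → (ψ ∈ (f₂ S).1ᗮ ↔ rayRep f₁ ψ ∈ S.1ᗮ))

include hmem in
theorem rayRep_mem_span_image {s : Set H} (hs : s.Finite) {ψ : H} (h : ψ ∈ span ℂ s) :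
    rayRep f₁ ψ ∈ span ℂ (rayRep f₁ '' s) := by
  by_cases hψ : ψ = 0
  · simp [hψ]
  have hs' : s ⊆ (f₂ (finiteSpan (hs.image (rayRep f₁)))).1 := fun x hx => by
    by_cases hx0 : x = 0
    · simp [hx0]
    exact (hmem _ x hx0).mpr (Submodule.subset_span ⟨x, hx, rfl⟩)
  exact (hmem _ ψ hψ).mp (Submodule.span_le.mpr hs' h)

include hmem in
theorem f₂_span_rayRep (hinj : Function.Injective f₁) {χ : H} (hχ : χ ≠ 0) :
    (f₂ (finiteSpan (Set.finite_singleton (rayRep f₁ χ)))).1 = ℂ ∙ χ := by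
  ext x
  by_cases hx : x = 0
  · simp [hx]
  rw [hmem _ x hx]
  change rayRep f₁ x ∈ ℂ ∙ rayRep f₁ χ ↔ _
  rw [← Projectivization.mk_eq_mk_iff_mem_span_singleton (rayRep_ne_zero hx)
    (rayRep_ne_zero hχ), mk_rayRep hx, mk_rayRep hχ, hinj.eq_iff,
    Projectivization.mk_eq_mk_iff_mem_span_singleton hx hχ]

include hmem horth in
theorem inner_rayRep_eq_zero_iff (hinj : Function.Injective f₁) (χ ψ : H) :
    ⟪rayRep f₁ χ, rayRep f₁ ψ⟫_ℂ = 0 ↔ ⟪χ, ψ⟫_ℂ = 0 := by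
  by_cases hχ : χ = 0
  · simp [hχ]
  by_cases hψ : ψ = 0
  · simp [hψ]
  have h := horth (finiteSpan (Set.finite_singleton (rayRep f₁ χ))) ψ hψ
  rw [f₂_span_rayRep hmem hinj hχ] at h
  simp only [finiteSpan, Submodule.mem_orthogonal_singleton_iff_inner_right] at h
  exact h.symm

include hmem horth in
theorem inner_rayRep_eq_zero_of_forall_notMem {k : K}
    (h : ∀ ψ, ψ ≠ 0 → rayRep f₁ ψ ∉ ℂ ∙ k) (ψ : H) : ⟪k, rayRep f₁ ψ⟫_ℂ = 0 := by
  by_cases hψ : ψ = 0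
  · simp [hψ]
  have hbot : (f₂ (finiteSpan (Set.finite_singleton k))).1 = ⊥ :=
    (Submodule.eq_bot_iff _).mpr fun x hx => by_contra fun hx0 => h x hx0 ((hmem _ x hx0).mp hx)
  have h' := (horth _ ψ hψ).mp (by rw [hbot, Submodule.bot_orthogonal_eq_top]; trivial)
  exact Submodule.mem_orthogonal_singleton_iff_inner_right.mp h'

include hmem horth in
theorem exists_rayRep_mem_span_singleton [Nontrivial H] {k : K} (hk : k ≠ 0) :
    ∃ ψ, ψ ≠ 0 ∧ rayRep f₁ ψ ∈ ℂ ∙ k := by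
  by_contra! hno
  obtain ⟨ψ₀, hψ₀⟩ := exists_ne (0 : H)
  have hkψ := inner_rayRep_eq_zero_of_forall_notMem hmem horth hno
  -- no image ray lies on the line through `k + rayRep ψ₀` either, since `k` is orthogonal to it
  have hno' : ∀ ψ, ψ ≠ 0 → rayRep f₁ ψ ∉ ℂ ∙ (k + rayRep f₁ ψ₀) := by
    intro ψ hψ hmem'
    obtain ⟨c, hc⟩ := Submodule.mem_span_singleton.mp hmem'
    have : c * ⟪k, k⟫_ℂ = 0 := by
      simpa [← hc, inner_add_right, inner_smul_right, hkψ ψ₀] using hkψ ψ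
    rw [mul_eq_zero, inner_self_eq_zero] at this
    exact rayRep_ne_zero hψ (by rw [← hc, this.resolve_right hk, zero_smul])
  have := inner_rayRep_eq_zero_of_forall_notMem hmem horth hno' ψ₀
  rw [inner_add_left, hkψ ψ₀, zero_add, inner_self_eq_zero] at this
  exact rayRep_ne_zero hψ₀ this

include hmem horth in
theorem isOrthoCollinear_rayRep [Nontrivial H] (hinj : Function.Injective f₁) :
    IsOrthoCollinear (rayRep f₁) where
  inner_eq_zero_iff := inner_rayRep_eq_zero_iff hmem horth hinj
  mem_span_pair h := by
    simpa [Set.image_pair] using rayRep_mem_span_image hmem (Set.toFinite _) h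
  exists_mem_span_singleton _ := exists_rayRep_mem_span_singleton hmem horth

end ChuMorphism

def coordRatio (F : H → K) (e : ι → H) (i j : ι) (c : ℂ) : ℂ :=
  ⟪F (e j), F (e i + c • e j)⟫_ℂ / ⟪F (e i), F (e i + c • e j)⟫_ℂ

def normalizedCoordRatio (F : H → K) (e : ι → H) (i j : ι) (c : ℂ) : ℂ :=
  coordRatio F e i j c / coordRatio F e i j 1

-- With `v t := phase F e a t • F (e t)`, the vector `F (e a + e t)` lies on the ray of `v a + v t`.
open Classical in
def phase (F : H → K) (e : ι → H) (a t : ι) : ℂ :=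
  if t = a then 1 else coordRatio F e a t 1

namespace IsOrthoCollinear

variable {F : H → K} (hF : IsOrthoCollinear F)
include hF

section Coordinates

variable {e : ι → H} (he : Orthonormal ℂ e)
include he

theorem coordRatio_zero {i j : ι} (hij : i ≠ j) : coordRatio F e i j 0 = 0 := by
  rw [coordRatio, zero_smul, add_zero, (hF.inner_eq_zero_iff _ _).mpr (he.inner_eq_zero hij.symm),
    zero_div]

theorem inner_map_add_smul_ne_zero {i j : ι} (hij : i ≠ j) (c : ℂ) :
    ⟪F (e i), F (e i + c • e j)⟫_ℂ ≠ 0 := by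
  rw [Ne, hF.inner_eq_zero_iff]
  simp [he.inner_eq_zero hij, he.norm_eq_one]

theorem coordRatio_ne_zero {i j : ι} (hij : i ≠ j) {c : ℂ} (hc : c ≠ 0) :
    coordRatio F e i j c ≠ 0 := by
  refine div_ne_zero ?_ (hF.inner_map_add_smul_ne_zero he hij c)
  rw [Ne, hF.inner_eq_zero_iff]
  simp [he.inner_eq_zero hij.symm, he.norm_eq_one, hc]

theorem inner_map_add_smul_right {i j : ι} (hij : i ≠ j) (c : ℂ) :
    ⟪F (e j), F (e i + c • e j)⟫_ℂ = coordRatio F e i j c * ⟪F (e i), F (e i + c • e j)⟫_ℂ :=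
  (div_mul_cancel₀ _ (hF.inner_map_add_smul_ne_zero he hij c)).symm

theorem coordRatio_eq_mul_normalizedCoordRatio {i j : ι} (hij : i ≠ j) (c : ℂ) :
    coordRatio F e i j c = coordRatio F e i j 1 * normalizedCoordRatio F e i j c :=
  (mul_div_cancel₀ _ (hF.coordRatio_ne_zero he hij one_ne_zero)).symm

variable (hFe : Orthonormal ℂ (F ∘ e))
include hFe

theorem map_add_smul {i j : ι} (hij : i ≠ j) (c : ℂ) :
    F (e i + c • e j) =
      ⟪F (e i), F (e i + c • e j)⟫_ℂ • (F (e i) + coordRatio F e i j c • F (e j)) := by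
  obtain ⟨α, β, hαβ⟩ := Submodule.mem_span_pair.mp (hF.mem_span_pair (x := e i) (y := e j)
    (Submodule.mem_span_pair.mpr ⟨1, c, by rw [one_smul]⟩))
  have h₁ : ∀ t, ‖F (e t)‖ = 1 := hFe.norm_eq_one
  have h₀ : ∀ {s t}, s ≠ t → ⟪F (e s), F (e t)⟫_ℂ = 0 := hFe.inner_eq_zero
  have hα : ⟪F (e i), F (e i + c • e j)⟫_ℂ = α := by
    simp [← hαβ, h₀ hij, h₁]
  have hβ : ⟪F (e j), F (e i + c • e j)⟫_ℂ = β := by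
    simp [← hαβ, h₀ hij.symm, h₁]
  rw [smul_add, smul_smul, mul_comm, coordRatio, div_mul_cancel₀ _
    (hF.inner_map_add_smul_ne_zero he hij c), hα, hβ, hαβ]

theorem inner_map_add_conj_mul_eq_zero {i j : ι} (hij : i ≠ j) {x : ℂ} {ψ : H}
    (h : ⟪e i + x • e j, ψ⟫_ℂ = 0) :
    ⟪F (e i), F ψ⟫_ℂ + conj (coordRatio F e i j x) * ⟪F (e j), F ψ⟫_ℂ = 0 := by
  have h' := (hF.inner_eq_zero_iff _ _).mpr h
  rw [hF.map_add_smul he hFe hij, inner_smul_left, inner_add_left, inner_smul_left, mul_eq_zero,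
    map_eq_zero] at h'
  exact h'.resolve_left (hF.inner_map_add_smul_ne_zero he hij x)

theorem one_add_conj_mul_coordRatio_eq_zero {i j : ι} (hij : i ≠ j) {x y : ℂ}
    (h : 1 + conj x * y = 0) : 1 + conj (coordRatio F e i j x) * coordRatio F e i j y = 0 := by
  have key := hF.inner_map_add_conj_mul_eq_zero he hFe hij (x := x) (ψ := e i + y • e j) (by
    simp [he.inner_eq_zero hij, he.inner_eq_zero hij.symm, he.norm_eq_one]
    linear_combination h)
  rw [hF.inner_map_add_smul_right he hij] at key
  exact mul_left_cancel₀ (hF.inner_map_add_smul_ne_zero he hij y) (by linear_combination key)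

theorem inner_map_eq_coordRatio_mul {i j : ι} (hij : i ≠ j) {ψ : H} (hψ : ⟪e i, ψ⟫_ℂ ≠ 0) :
    ⟪F (e j), F ψ⟫_ℂ = coordRatio F e i j (⟪e j, ψ⟫_ℂ / ⟪e i, ψ⟫_ℂ) * ⟪F (e i), F ψ⟫_ℂ := by
  set c := ⟪e j, ψ⟫_ℂ / ⟪e i, ψ⟫_ℂ with hc_def
  by_cases hc : c = 0
  · rw [hc, hF.coordRatio_zero he hij, zero_mul, hF.inner_eq_zero_iff]
    simpa [hc_def, hψ] using hc
  have hψj : ⟪e j, ψ⟫_ℂ ≠ 0 := fun h => hc (by simp [hc_def, h])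
  -- `e i - (conj c)⁻¹ • e j` is orthogonal both to `ψ` and to `e i + c • e j`
  have h₁ := hF.inner_map_add_conj_mul_eq_zero he hFe hij (x := -(conj c)⁻¹) (ψ := ψ) (by
    rw [inner_add_left, inner_smul_left, hc_def, map_neg, map_inv₀, Complex.conj_conj]
    field_simp
    ring)
  have h₂ := hF.one_add_conj_mul_coordRatio_eq_zero he hFe hij (x := -(conj c)⁻¹) (y := c) (by
    simp [hc])
  linear_combination ⟪F (e j), F ψ⟫_ℂ * h₂ - coordRatio F e i j c * h₁

theorem inner_map_eq_coordRatio_mul_of_inner_eq {i j : ι} (hij : i ≠ j) {ψ : H} {c : ℂ}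
    (hi : ⟪e i, ψ⟫_ℂ = 1) (hj : ⟪e j, ψ⟫_ℂ = c) :
    ⟪F (e j), F ψ⟫_ℂ = coordRatio F e i j c * ⟪F (e i), F ψ⟫_ℂ := by
  simpa [hi, hj] using hF.inner_map_eq_coordRatio_mul he hFe hij (ψ := ψ) (by simp [hi])

theorem coordRatio_mul_eq {i j k : ι} (hij : i ≠ j) (hik : i ≠ k) (hjk : j ≠ k) (a l d : ℂ) :
    coordRatio F e i k (l * d) =
      coordRatio F e j k d * (coordRatio F e i j (a + l) - coordRatio F e i j a) := by
  classical
  have he' := orthonormal_iff_ite.mp he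
  -- compare the coordinates of `F` on both sides of
  -- `e i + (a + l) • e j + (l * d) • e k = (e i + a • e j) + l • (e j + d • e k)`
  set p := e i + a • e j with hp
  set q := e j + d • e k with hq
  obtain ⟨α, β, hz⟩ := Submodule.mem_span_pair.mp (hF.mem_span_pair (x := p) (y := q)
    (Submodule.mem_span_pair.mpr ⟨1, l, by rw [one_smul]⟩))
  have coord : ∀ t, ⟪F (e t), F (p + l • q)⟫_ℂ =
      α * ⟪F (e t), F p⟫_ℂ + β * ⟪F (e t), F q⟫_ℂ := fun t => by
    rw [← hz, inner_add_right, inner_smul_right, inner_smul_right]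
  have hzi : ⟪e i, p + l • q⟫_ℂ = 1 := by simp [hp, hq, he', he.norm_eq_one, hij, hik]
  have hpj := hF.inner_map_eq_coordRatio_mul_of_inner_eq he hFe hij (ψ := p) (c := a)
    (by simp [hp, he', he.norm_eq_one, hij]) (by simp [hp, he', he.norm_eq_one, hij.symm])
  have hqk := hF.inner_map_eq_coordRatio_mul_of_inner_eq he hFe hjk (ψ := q) (c := d)
    (by simp [hq, he', he.norm_eq_one, hjk]) (by simp [hq, he', he.norm_eq_one, hjk.symm])
  have hzj := hF.inner_map_eq_coordRatio_mul_of_inner_eq he hFe hij (c := a + l) hzi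
    (by simp [hp, hq, he', he.norm_eq_one, hij.symm, hjk])
  have hzk := hF.inner_map_eq_coordRatio_mul_of_inner_eq he hFe hik (c := l * d) hzi
    (by simp [hp, hq, he', he.norm_eq_one, hik.symm, hjk.symm])
  have hpk : ⟪F (e k), F p⟫_ℂ = 0 :=
    (hF.inner_eq_zero_iff _ _).mpr (by simp [hp, he', hik.symm, hjk.symm])
  have hqi : ⟪F (e i), F q⟫_ℂ = 0 :=
    (hF.inner_eq_zero_iff _ _).mpr (by simp [hq, he', hij, hik])
  have hz0 : ⟪F (e i), F (p + l • q)⟫_ℂ ≠ 0 := by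
    rw [Ne, hF.inner_eq_zero_iff, hzi]; exact one_ne_zero
  have hi := coord i
  have hj := coord j
  have hk := coord k
  rw [hqi] at hi
  rw [hzj, hpj] at hj
  rw [hzk, hpk, hqk] at hk
  refine mul_left_cancel₀ hz0 ?_
  linear_combination hk - coordRatio F e j k d * hj
    + coordRatio F e j k d * coordRatio F e i j a * hi

theorem coordRatio_mul {i j k : ι} (hij : i ≠ j) (hik : i ≠ k) (hjk : j ≠ k) (l d : ℂ) :
    coordRatio F e i k (l * d) = coordRatio F e j k d * coordRatio F e i j l := by
  simpa [hF.coordRatio_zero he hij] using hF.coordRatio_mul_eq he hFe hij hik hjk 0 l d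

theorem coordRatio_add {i j k : ι} (hij : i ≠ j) (hik : i ≠ k) (hjk : j ≠ k) (a l : ℂ) :
    coordRatio F e i j (a + l) = coordRatio F e i j a + coordRatio F e i j l := by
  have h₁ := hF.coordRatio_mul_eq he hFe hij hik hjk a l 1
  have h₂ := hF.coordRatio_mul he hFe hij hik hjk l 1
  refine mul_left_cancel₀ (hF.coordRatio_ne_zero he hjk one_ne_zero) ?_
  linear_combination h₂ - h₁

theorem conj_coordRatio_one_mul_self {i j k : ι} (hij : i ≠ j) (hik : i ≠ k) (hjk : j ≠ k) :
    conj (coordRatio F e i j 1) * coordRatio F e i j 1 = 1 := by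
  have h₁ := hF.one_add_conj_mul_coordRatio_eq_zero he hFe hij (x := -1) (y := 1) (by simp)
  have h₂ := hF.coordRatio_add he hFe hij hik hjk (-1) 1
  rw [neg_add_cancel, hF.coordRatio_zero he hij] at h₂
  rw [show coordRatio F e i j (-1) = -coordRatio F e i j 1 by linear_combination -h₂,
    map_neg] at h₁
  linear_combination -h₁

theorem norm_coordRatio_one {i j k : ι} (hij : i ≠ j) (hik : i ≠ k) (hjk : j ≠ k) :
    ‖coordRatio F e i j 1‖ = 1 := by
  have h := hF.conj_coordRatio_one_mul_self he hFe hij hik hjk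
  rw [Complex.conj_mul'] at h
  exact (pow_eq_one_iff_of_nonneg (norm_nonneg _) two_ne_zero).mp (by exact_mod_cast h)

theorem map_conj_of_coordRatio_eq {i j k : ι} (hij : i ≠ j) (hik : i ≠ k) (hjk : j ≠ k)
    {σ : ℂ →+* ℂ} (hσ : ∀ c, coordRatio F e i j c = coordRatio F e i j 1 * σ c) (c : ℂ) :
    σ (conj c) = conj (σ c) := by
  by_cases hc : c = 0
  · simp [hc]
  have h := hF.one_add_conj_mul_coordRatio_eq_zero he hFe hij (x := c) (y := -(conj c)⁻¹)
    (by rw [mul_neg, mul_inv_cancel₀ ((map_ne_zero _).mpr hc), add_neg_cancel])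
  have hν := hF.conj_coordRatio_one_mul_self he hFe hij hik hjk
  have hs := mul_inv_cancel₀ (show σ (conj c) ≠ 0 by simpa using hc)
  rw [hσ c, hσ (-(conj c)⁻¹), map_neg, map_inv₀, map_mul] at h
  linear_combination σ (conj c) * h + conj (σ c) * conj (coordRatio F e i j 1)
    * coordRatio F e i j 1 * hs + conj (σ c) * hν

theorem normalizedCoordRatio_congr_right {i j k : ι} (hij : i ≠ j) (hik : i ≠ k) (hjk : j ≠ k) :
    normalizedCoordRatio F e i j = normalizedCoordRatio F e i k := by
  funext c
  have h₁ := hF.coordRatio_mul he hFe hij hik hjk c 1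
  have h₂ := hF.coordRatio_mul he hFe hij hik hjk 1 1
  rw [mul_one] at h₁ h₂
  rw [normalizedCoordRatio, normalizedCoordRatio, h₁, h₂,
    mul_div_mul_left _ _ (hF.coordRatio_ne_zero he hjk one_ne_zero)]

theorem normalizedCoordRatio_congr_left {i j k : ι} (hij : i ≠ j) (hik : i ≠ k) (hjk : j ≠ k) :
    normalizedCoordRatio F e i j = normalizedCoordRatio F e k j := by
  funext c
  have h₁ := hF.coordRatio_mul he hFe hik hij hjk.symm 1 c
  have h₂ := hF.coordRatio_mul he hFe hik hij hjk.symm 1 1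
  rw [one_mul] at h₁ h₂
  rw [normalizedCoordRatio, normalizedCoordRatio, h₁, h₂,
    mul_div_mul_right _ _ (hF.coordRatio_ne_zero he hik one_ne_zero)]

theorem normalizedCoordRatio_eq (hι : ∀ i j : ι, ∃ k, k ≠ i ∧ k ≠ j) {i j i' j' : ι}
    (hij : i ≠ j) (hij' : i' ≠ j') :
    normalizedCoordRatio F e i j = normalizedCoordRatio F e i' j' := by
  have right : ∀ {i j k : ι}, i ≠ j → i ≠ k →
      normalizedCoordRatio F e i j = normalizedCoordRatio F e i k := fun {i j k} hij hik => by
    rcases eq_or_ne j k with rfl | hjk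
    · rfl
    · exact hF.normalizedCoordRatio_congr_right he hFe hij hik hjk
  have left : ∀ {i j k : ι}, i ≠ j → k ≠ j →
      normalizedCoordRatio F e i j = normalizedCoordRatio F e k j := fun {i j k} hij hkj => by
    rcases eq_or_ne i k with rfl | hik
    · rfl
    · exact hF.normalizedCoordRatio_congr_left he hFe hij hik hkj.symm
  rcases ne_or_eq i' j with hi'j | rfl
  · exact (left hij hi'j).trans (right hi'j hij')
  rcases ne_or_eq i j' with hij'' | rfl
  · exact (right hij hij'').trans (left hij'' hij')
  obtain ⟨k, hki, hkj⟩ := hι i i'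
  calc normalizedCoordRatio F e i i' = normalizedCoordRatio F e i k := right hij hki.symm
    _ = normalizedCoordRatio F e i' k := left hki.symm hkj.symm
    _ = normalizedCoordRatio F e i' i := right hkj.symm hij'

theorem exists_ringHom_coordRatio_eq [Nonempty ι] (hι : ∀ i j : ι, ∃ k, k ≠ i ∧ k ≠ j) :
    ∃ σ : ℂ →+* ℂ, (σ = RingHom.id ℂ ∨ σ = starRingEnd ℂ) ∧
      ∀ i j, i ≠ j → ∀ c, coordRatio F e i j c = coordRatio F e i j 1 * σ c := by
  obtain ⟨i⟩ := ‹Nonempty ι›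
  obtain ⟨j, hji, -⟩ := hι i i
  obtain ⟨k, hki, hkj⟩ := hι i j
  have hij := hji.symm
  have hik := hki.symm
  have hjk := hkj.symm
  let σ : ℂ →+* ℂ :=
    { toFun := normalizedCoordRatio F e i j
      map_one' := div_self (hF.coordRatio_ne_zero he hij one_ne_zero)
      map_mul' := fun x y => by
        have h₁ := hF.coordRatio_mul he hFe hik hij hjk.symm x y
        have h₂ := hF.coordRatio_mul he hFe hik hij hjk.symm 1 1
        have hne₁ := hF.coordRatio_ne_zero he hik one_ne_zero
        have hne₂ := hF.coordRatio_ne_zero he hkj one_ne_zero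
        rw [one_mul] at h₂
        rw [congrFun (hF.normalizedCoordRatio_congr_right he hFe hij hik hjk) x,
          congrFun (hF.normalizedCoordRatio_congr_left he hFe hij hik hjk) y,
          normalizedCoordRatio, normalizedCoordRatio, normalizedCoordRatio, h₁, h₂]
        field_simp
      map_zero' := by rw [normalizedCoordRatio, hF.coordRatio_zero he hij, zero_div]
      map_add' := fun x y => by
        rw [normalizedCoordRatio, hF.coordRatio_add he hFe hij hik hjk, add_div]
        rfl }
  have hσ : ∀ i' j', i' ≠ j' → ∀ c, coordRatio F e i' j' c = coordRatio F e i' j' 1 * σ c :=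
    fun i' j' hij' c => by
      rw [hF.coordRatio_eq_mul_normalizedCoordRatio he hij' c,
        hF.normalizedCoordRatio_eq he hFe hι hij' hij]
      rfl
  exact ⟨σ, Complex.ringHom_eq_id_or_conj_of_map_conj
    (hF.map_conj_of_coordRatio_eq he hFe hij hik hjk (hσ i j hij)), hσ⟩

theorem coordRatio_one_eq_mul {i j k : ι} (hij : i ≠ j) (hik : i ≠ k) (hjk : j ≠ k) :
    coordRatio F e i k 1 = coordRatio F e j k 1 * coordRatio F e i j 1 := by
  simpa using hF.coordRatio_mul he hFe hij hik hjk 1 1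

theorem coordRatio_one_mul_swap {i j k : ι} (hij : i ≠ j) (hik : i ≠ k) (hjk : j ≠ k) :
    coordRatio F e i j 1 * coordRatio F e j i 1 = 1 := by
  have h₁ := hF.coordRatio_one_eq_mul he hFe hij hik hjk
  have h₂ := hF.coordRatio_one_eq_mul he hFe hij.symm hjk hik
  refine mul_left_cancel₀ (hF.coordRatio_ne_zero he hik one_ne_zero) ?_
  linear_combination -coordRatio F e i j 1 * h₂ - h₁

theorem phase_mul_coordRatio_one (hι : ∀ i j : ι, ∃ k, k ≠ i ∧ k ≠ j) (a : ι) {s t : ι}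
    (hst : s ≠ t) : phase F e a s * coordRatio F e s t 1 = phase F e a t := by
  obtain ⟨k, hks, hkt⟩ := hι s t
  rcases eq_or_ne s a with rfl | hs
  · simp [phase, hst.symm]
  rcases eq_or_ne t a with rfl | ht
  · simpa [phase, hs] using hF.coordRatio_one_mul_swap he hFe hst.symm hkt.symm hks.symm
  · rw [phase, phase, if_neg hs, if_neg ht, mul_comm,
      hF.coordRatio_one_eq_mul he hFe (Ne.symm hs) (Ne.symm ht) hst]

theorem norm_phase (hι : ∀ i j : ι, ∃ k, k ≠ i ∧ k ≠ j) (a t : ι) : ‖phase F e a t‖ = 1 := by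
  rcases eq_or_ne t a with rfl | ht
  · simp [phase]
  obtain ⟨k, hka, hkt⟩ := hι a t
  rw [phase, if_neg ht]
  exact hF.norm_coordRatio_one he hFe (Ne.symm ht) hka.symm hkt.symm

theorem orthonormal_phase_smul (hι : ∀ i j : ι, ∃ k, k ≠ i ∧ k ≠ j) (a : ι) :
    Orthonormal ℂ fun t => phase F e a t • F (e t) := by
  refine ⟨fun t => ?_, fun s t hst => ?_⟩
  · rw [norm_smul, hF.norm_phase he hFe hι, one_mul]
    exact hFe.norm_eq_one t
  · have h : ⟪F (e s), F (e t)⟫_ℂ = 0 := hFe.inner_eq_zero hst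
    simp [inner_smul_left, inner_smul_right, h]

theorem exists_inner_phase_smul_eq (hι : ∀ i j : ι, ∃ k, k ≠ i ∧ k ≠ j) {σ : ℂ →+* ℂ}
    (hσ : ∀ i j, i ≠ j → ∀ c, coordRatio F e i j c = coordRatio F e i j 1 * σ c)
    (a : ι) (ψ : H) :
    ∃ μ : ℂ, ∀ t, ⟪phase F e a t • F (e t), F ψ⟫_ℂ = μ * σ ⟪e t, ψ⟫_ℂ := by
  by_cases h : ∃ i, ⟪e i, ψ⟫_ℂ ≠ 0
  swap
  · refine ⟨0, fun t => ?_⟩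
    rw [inner_smul_left, (hF.inner_eq_zero_iff _ _).mpr (not_not.mp (not_exists.mp h t)),
      mul_zero, zero_mul]
  obtain ⟨i, hi⟩ := h
  have hσi : σ ⟪e i, ψ⟫_ℂ ≠ 0 := (map_ne_zero σ).mpr hi
  refine ⟨conj (phase F e a i) * ⟪F (e i), F ψ⟫_ℂ / σ ⟪e i, ψ⟫_ℂ, fun t => ?_⟩
  rw [inner_smul_left]
  rcases eq_or_ne i t with rfl | hit
  · field_simp
  have hp := hF.phase_mul_coordRatio_one he hFe hι a hit
  have hu : ∀ s, conj (phase F e a s) * phase F e a s = 1 := fun s => by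
    rw [Complex.conj_mul', hF.norm_phase he hFe hι]
    norm_num
  rw [hF.inner_map_eq_coordRatio_mul he hFe hit hi, hσ i t hit, map_div₀]
  linear_combination σ ⟪e t, ψ⟫_ℂ / σ ⟪e i, ψ⟫_ℂ * ⟪F (e i), F ψ⟫_ℂ *
    (-conj (phase F e a t) * coordRatio F e i t 1 * hu i
      + conj (phase F e a i) * conj (phase F e a t) * hp + conj (phase F e a i) * hu t)

end Coordinates

theorem eq_zero_of_forall_inner_eq_zero (b : HilbertBasis ι ℂ H) {k : K}
    (h : ∀ t, ⟪F (b t), k⟫_ℂ = 0) : k = 0 := by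
  by_contra hk
  obtain ⟨ψ, hψ, hψk⟩ := hF.exists_mem_span_singleton k hk
  obtain ⟨c, hc⟩ := Submodule.mem_span_singleton.mp hψk
  refine hψ (b.ext_inner fun t => ?_)
  rw [inner_zero_right, ← hF.inner_eq_zero_iff, ← hc, inner_smul_right, h t, mul_zero]

theorem exists_hilbertBasis_inner_eq [CompleteSpace K] [Nonempty ι] (b : HilbertBasis ι ℂ H)
    (hFb : Orthonormal ℂ (F ∘ b)) (hι : ∀ i j : ι, ∃ k, k ≠ i ∧ k ≠ j) :
    ∃ σ : ℂ →+* ℂ, (σ = RingHom.id ℂ ∨ σ = starRingEnd ℂ) ∧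
      ∃ bK : HilbertBasis ι ℂ K, ∀ ψ, ∃ μ : ℂ, ∀ t, ⟪bK t, F ψ⟫_ℂ = μ * σ ⟪b t, ψ⟫_ℂ := by
  obtain ⟨σ, hσ, hg⟩ := hF.exists_ringHom_coordRatio_eq b.orthonormal hFb hι
  obtain ⟨a⟩ := ‹Nonempty ι›
  have hv := hF.orthonormal_phase_smul b.orthonormal hFb hι a
  have hsp : (span ℂ (Set.range fun t => phase F b a t • F (b t)))ᗮ = ⊥ := by
    refine (Submodule.eq_bot_iff _).mpr fun k hk =>
      hF.eq_zero_of_forall_inner_eq_zero b fun t => ?_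
    have h := Submodule.inner_right_of_mem_orthogonal
      (Submodule.subset_span (Set.mem_range_self t)) hk
    rw [inner_smul_left, mul_eq_zero, map_eq_zero] at h
    exact h.resolve_left (norm_ne_zero_iff.mp (by simp [hF.norm_phase b.orthonormal hFb hι]))
  refine ⟨σ, hσ, HilbertBasis.mkOfOrthogonalEqBot hv hsp, fun ψ => ?_⟩
  rw [HilbertBasis.coe_mkOfOrthogonalEqBot]
  exact hF.exists_inner_phase_smul_eq b.orthonormal hFb hι hg a ψ

theorem exists_semiunitary [CompleteSpace H] [CompleteSpace K] (hF1 : ∀ x, x ≠ 0 → ‖F x‖ = 1)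
    (hH : 2 < Module.rank ℂ H) :
    (∃ U : H ≃ₗᵢ[ℂ] K, ∀ x, ∃ μ : ℂ, F x = μ • U x) ∨
      ∃ U : H ≃ₛₗᵢ[starRingEnd ℂ] K, ∀ x, ∃ μ : ℂ, F x = μ • U x := by
  obtain ⟨w, b, -⟩ := exists_hilbertBasis ℂ H
  have hw : 2 < #w := by exact_mod_cast b.lt_mk_of_lt_rank (n := 2) (by exact_mod_cast hH)
  have : Nonempty w := Cardinal.mk_ne_zero_iff.mp (ne_zero_of_lt hw)
  have hFb : Orthonormal ℂ (F ∘ b) := ⟨fun t => hF1 _ (b.orthonormal.ne_zero t),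
    fun s t hst => (hF.inner_eq_zero_iff _ _).mpr (b.orthonormal.inner_eq_zero hst)⟩
  obtain ⟨σ, rfl | rfl, bK, hbK⟩ := hF.exists_hilbertBasis_inner_eq b hFb
    (Cardinal.exists_ne_ne_of_three_le (by exact_mod_cast Cardinal.natCast_add_one_le_iff.mpr hw))
  · refine .inl ⟨b.repr.trans bK.repr.symm, fun x => ?_⟩
    obtain ⟨μ, hμ⟩ := hbK x
    refine ⟨μ, bK.ext_inner fun t => ?_⟩
    rw [hμ, inner_smul_right, ← bK.repr_apply_apply, LinearIsometryEquiv.trans_apply,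
      LinearIsometryEquiv.apply_symm_apply, b.repr_apply_apply, RingHom.id_apply]
  · refine .inr ⟨(b.repr.trans (starₗᵢ ℂ)).trans bK.repr.symm, fun x => ?_⟩
    obtain ⟨μ, hμ⟩ := hbK x
    refine ⟨μ, bK.ext_inner fun t => ?_⟩
    rw [hμ, inner_smul_right, ← bK.repr_apply_apply, LinearIsometryEquiv.trans_apply,
      LinearIsometryEquiv.apply_symm_apply, LinearIsometryEquiv.trans_apply, starₗᵢ_apply,
      lp.star_apply, b.repr_apply_apply]
    rfl

end IsOrthoCollinear

end

theorem three_valued_chu_morphism_semiunitary_general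
    {H K : Type*} [NormedAddCommGroup H] [InnerProductSpace ℂ H] [CompleteSpace H]
    [NormedAddCommGroup K] [InnerProductSpace ℂ K] [CompleteSpace K]
    (hH : Module.rank ℂ H > 2)
    (f₁ : Projectivization ℂ H → Projectivization ℂ K)
    (hinj : Function.Injective f₁)
    (f₂ : {S : Submodule ℂ K // IsClosed (S : Set K)} →
          {S : Submodule ℂ H // IsClosed (S : Set H)})
    (hmem : ∀ (ψ : H) (hψ : ψ ≠ 0) (S : {S : Submodule ℂ K // IsClosed (S : Set K)})
      (φ : K) (hφ : φ ≠ 0), Projectivization.mk ℂ φ hφ = f₁ (Projectivization.mk ℂ ψ hψ) →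
      (ψ ∈ (f₂ S).1 ↔ φ ∈ S.1))
    (horth : ∀ (ψ : H) (hψ : ψ ≠ 0) (S : {S : Submodule ℂ K // IsClosed (S : Set K)})
      (φ : K) (hφ : φ ≠ 0), Projectivization.mk ℂ φ hφ = f₁ (Projectivization.mk ℂ ψ hψ) →
      (ψ ∈ ((f₂ S).1)ᗮ ↔ φ ∈ (S.1)ᗮ)) :
    (∃ U : H ≃ₗᵢ[ℂ] K, ∀ (ψ : H) (hψ : ψ ≠ 0) (hUψ : U ψ ≠ 0),
        f₁ (Projectivization.mk ℂ ψ hψ) = Projectivization.mk ℂ (U ψ) hUψ) ∨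
    (∃ U : H ≃ₛₗᵢ[starRingEnd ℂ] K, ∀ (ψ : H) (hψ : ψ ≠ 0) (hUψ : U ψ ≠ 0),
        f₁ (Projectivization.mk ℂ ψ hψ) = Projectivization.mk ℂ (U ψ) hUψ) := by
  have : Nontrivial H := rank_pos_iff_nontrivial.mp (lt_trans (by norm_num) hH)
  have hF := isOrthoCollinear_rayRep (fun S ψ hψ => hmem ψ hψ S _ _ (mk_rayRep hψ))
    (fun S ψ hψ => horth ψ hψ S _ _ (mk_rayRep hψ)) hinj
  rcases hF.exists_semiunitary (fun _ => norm_rayRep) hH with ⟨U, hU⟩ | ⟨U, hU⟩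
  · exact .inl ⟨U, fun ψ hψ hUψ => apply_mk_eq_mk_of_rayRep_eq_smul hψ hUψ (hU ψ)⟩
  · exact .inr ⟨U, fun ψ hψ hUψ => apply_mk_eq_mk_of_rayRep_eq_smul hψ hUψ (hU ψ)⟩

/-- Fullness of the three-valued representation.  Let `H`, `K` be complex Hilbert spaces of
dimension greater than 2, `f₁ : ℙ(H) → ℙ(K)` injective, and `f₂` a map from closed subspaces
of `K` to closed subspaces of `H` such that for every nonzero `ψ ∈ H`, closed subspace `S` of
`K`, and representative `φ` of `f₁ [ψ]`: (i) `ψ ∈ f₂ S ↔ φ ∈ S` and (ii) `ψ ⊥ f₂ S ↔ φ ⊥ S`.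
(These express the Chu morphism condition after composing the evaluation with the map
`v : [0,1] → {0,1,2}` sending `0 ↦ 0`, `1 ↦ 1`, `(0,1) ↦ 2`.)  Then there is a semiunitary
`U : H → K` — unitary (`H ≃ₗᵢ[ℂ] K`) or antiunitary (`H ≃ₛₗᵢ[starRingEnd ℂ] K`) — with
`f₁ [ψ] = [U ψ]` for every nonzero `ψ`. -/
theorem three_valued_chu_morphism_semiunitary
    {H K : Type*} [NormedAddCommGroup H] [InnerProductSpace ℂ H] [CompleteSpace H]
    [NormedAddCommGroup K] [InnerProductSpace ℂ K] [CompleteSpace K]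
    (hH : Module.rank ℂ H > 2) (hK : Module.rank ℂ K > 2)
    (f₁ : Projectivization ℂ H → Projectivization ℂ K)
    (hinj : Function.Injective f₁)
    (f₂ : {S : Submodule ℂ K // IsClosed (S : Set K)} →
          {S : Submodule ℂ H // IsClosed (S : Set H)})
    (hmem : ∀ (ψ : H) (hψ : ψ ≠ 0) (S : {S : Submodule ℂ K // IsClosed (S : Set K)})
      (φ : K) (hφ : φ ≠ 0), Projectivization.mk ℂ φ hφ = f₁ (Projectivization.mk ℂ ψ hψ) →
      (ψ ∈ (f₂ S).1 ↔ φ ∈ S.1))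
    (horth : ∀ (ψ : H) (hψ : ψ ≠ 0) (S : {S : Submodule ℂ K // IsClosed (S : Set K)})
      (φ : K) (hφ : φ ≠ 0), Projectivization.mk ℂ φ hφ = f₁ (Projectivization.mk ℂ ψ hψ) →
      (ψ ∈ ((f₂ S).1)ᗮ ↔ φ ∈ (S.1)ᗮ)) :
    (∃ U : H ≃ₗᵢ[ℂ] K, ∀ (ψ : H) (hψ : ψ ≠ 0) (hUψ : U ψ ≠ 0),
        f₁ (Projectivization.mk ℂ ψ hψ) = Projectivization.mk ℂ (U ψ) hUψ) ∨
    (∃ U : H ≃ₛₗᵢ[starRingEnd ℂ] K, ∀ (ψ : H) (hψ : ψ ≠ 0) (hUψ : U ψ ≠ 0),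
        f₁ (Projectivization.mk ℂ ψ hψ) = Projectivization.mk ℂ (U ψ) hUψ) :=
  three_valued_chu_morphism_semiunitary_general hH f₁ hinj f₂ hmem horth
end
end
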